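/- Let ℓ ∈ ℕ and let G be a graph that admits a tree decomposition 𝒯 = (T, {X_t}) and a layering (V_0, V_1, …) such that α(G[X_t ∩ V_i]) ≤ ℓ for every bag X_t and layer V_i. Then for every integer r ≥ 1, G has a (1 − 1/r)-general cover 𝒞 consisting of r subsets of V(G) (each vertex belonging to exactly r − 1 of them) such that tree-α(G[C]) ≤ ℓ·(r − 1) for every C ∈ 𝒞. -/

import Mathlib

open Classical

/-- A tree decomposition of a graph `G`. -/
structure TreeDecomp {V : Type*} (G : SimpleGraph V) where
  ι : Type
  fin : Fintype ι
  T : SimpleGraph ι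
  isTree : T.IsTree
  bag : ι → Set V
  mem_bag : ∀ v : V, ∃ t, v ∈ bag t
  edge_bag : ∀ ⦃u v : V⦄, G.Adj u v → ∃ t, u ∈ bag t ∧ v ∈ bag t
  bag_connected : ∀ v : V, (T.induce {t | v ∈ bag t}).Connected

/-- `I` is an independent set of `G` contained in `S`, i.e. an independent set of `G[S]`. -/
def IsIndepSetIn {V : Type*} (G : SimpleGraph V) (S : Set V) (I : Finset V) : Prop :=
  ↑I ⊆ S ∧ ∀ u ∈ I, ∀ v ∈ I, u ≠ v → ¬ G.Adj u v

/-- `α(G[S]) ≤ k`. -/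
def IndepLE {V : Type*} (G : SimpleGraph V) (S : Set V) (k : ℕ) : Prop :=
  ∀ I : Finset V, IsIndepSetIn G S I → I.card ≤ k

/-- The independence number of the tree decomposition is at most `k`. -/
def TreeDecomp.IndepNumLE {V : Type*} {G : SimpleGraph V} (td : TreeDecomp G) (k : ℕ) : Prop :=
  ∀ t : td.ι, IndepLE G (td.bag t) k

/-- The tree-independence number of `G` is at most `k`. -/
def treeAlphaLE {V : Type*} (G : SimpleGraph V) (k : ℕ) : Prop :=
  ∃ td : TreeDecomp G, td.IndepNumLE k

/-- The tree-independence number of `G`. -/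
noncomputable def treeAlpha {V : Type*} (G : SimpleGraph V) : ℕ :=
  sInf {k | treeAlphaLE G k}

/-- A layering of `G`, encoded by the function sending a vertex to the index of its layer. -/
def IsLayering {V : Type*} (G : SimpleGraph V) (L : V → ℕ) : Prop :=
  ∀ ⦃u v : V⦄, G.Adj u v → (L u : ℤ) ≤ (L v : ℤ) + 1

/-- The layered tree-independence number of `G` is at most `k`. -/
def layeredTreeAlphaLE {V : Type*} (G : SimpleGraph V) (k : ℕ) : Prop :=
  ∃ (td : TreeDecomp G) (L : V → ℕ), IsLayering G L ∧
    ∀ (t : td.ι) (i : ℕ), IndepLE G (td.bag t ∩ {v | L v = i}) k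

/-- The layered tree-independence number of `G`. -/
noncomputable def layeredTreeAlpha {V : Type*} (G : SimpleGraph V) : ℕ :=
  sInf {k | layeredTreeAlphaLE G k}

/-- The number of elements of the multiset `𝒞` containing `v` (with multiplicity). -/
noncomputable def coverCount {V : Type*} (𝒞 : Multiset (Set V)) (v : V) : ℕ :=
  Multiset.countP (fun C => v ∈ C) 𝒞

/-- `𝒞` is a `β`-general cover: every vertex belongs to at least `β·|𝒞|` elements. -/
def IsGeneralCover {V : Type*} (β : ℝ) (𝒞 : Multiset (Set V)) : Prop :=
  𝒞 ≠ 0 ∧ ∀ v : V, β * (Multiset.card 𝒞 : ℝ) ≤ (coverCount 𝒞 v : ℝ)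

/-- The intersection graph of an (indexed) family of sets. -/
def intersectionGraph {ι : Type*} {α : Type*} (D : ι → Set α) : SimpleGraph ι where
  Adj i j := i ≠ j ∧ (D i ∩ D j).Nonempty
  symm := by
    constructor
    rintro i j ⟨hne, x, hx1, hx2⟩
    exact ⟨hne.symm, x, hx2, hx1⟩
  loopless := by
    constructor
    rintro i ⟨hne, -⟩
    exact hne rfl

/-- The `p`-th power of a graph. -/
def gpower {V : Type*} (G : SimpleGraph V) (p : ℕ) : SimpleGraph V where
  Adj u v := u ≠ v ∧ ∃ w : G.Walk u v, w.length ≤ p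
  symm := by
    constructor
    rintro u v ⟨hne, w, hw⟩
    exact ⟨hne.symm, w.reverse, by simpa using hw⟩
  loopless := by
    constructor
    rintro u ⟨hne, -⟩
    exact hne rfl

/-- The axis-aligned closed hypercube of side length `r` with lower corner `x`. -/
def cube (d : ℕ) (x : EuclideanSpace ℝ (Fin d)) (r : ℝ) : Set (EuclideanSpace ℝ (Fin d)) :=
  {y | ∀ i, x i ≤ y i ∧ y i ≤ x i + r}

/-- The size of an object: the side length of its smallest enclosing axis-aligned hypercube. -/
noncomputable def objSize (d : ℕ) (O : Set (EuclideanSpace ℝ (Fin d))) : ℝ :=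
  sInf {r : ℝ | 0 ≤ r ∧ ∃ x, O ⊆ cube d x r}

/-- The collection `O` is `c`-fat. -/
def IsFat {ι : Type*} (d : ℕ) (c : ℝ) (O : ι → Set (EuclideanSpace ℝ (Fin d))) : Prop :=
  ∀ r : ℝ, 0 < r → ∀ x : EuclideanSpace ℝ (Fin d), ∀ P : Finset ι,
    (∀ i ∈ P, ∀ j ∈ P, i ≠ j → Disjoint (O i) (O j)) →
    (∀ i ∈ P, (O i ∩ cube d x r).Nonempty ∧ r ≤ objSize d (O i)) →
    ∃ pts : Finset (EuclideanSpace ℝ (Fin d)),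
      (pts.card : ℝ) ≤ c ∧ ∀ i ∈ P, ∃ p ∈ pts, p ∈ O i

/-- The `n`-dimensional grid graph of width `n`. -/
def gridGraphN (n : ℕ) : SimpleGraph (Fin n → Fin n) where
  Adj a b := ∑ i, ((a i : ℤ) - (b i : ℤ)).natAbs = 1
  symm := by
    constructor
    intro a b h
    beta_reduce at h ⊢
    rw [← h]
    exact Finset.sum_congr rfl fun i _ => by omega
  loopless := by
    constructor
    intro a h
    simp at h

/-- The grid graph on `ℤ²`. -/
def latticeGraph : SimpleGraph (ℤ × ℤ) where
  Adj p q := (p.1 - q.1).natAbs + (p.2 - q.2).natAbs = 1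
  symm := by
    constructor
    intro p q h
    beta_reduce at h ⊢
    omega
  loopless := by
    constructor
    intro p h
    simp at h

/-- `P` is (the vertex set of) a path on the integer grid: a finite nonempty subset of `ℤ²`
whose induced subgraph in the grid graph is a path. -/
def IsGridPath (P : Set (ℤ × ℤ)) : Prop :=
  P.Finite ∧ P.Nonempty ∧ (latticeGraph.induce P).IsTree ∧
    ∀ v : P, ((latticeGraph.induce P).neighborSet v).ncard ≤ 2


/-!
Fix `s < r` and delete the layers congruent to `s` mod `r`. The remaining layers fall into
blocks of at most `r - 1` consecutive layers, and no edge joins two blocks. Intersecting each bag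
with each block, and gluing the copies of the decomposition tree (one per block) along a path,
gives a tree decomposition of what is left in which every bag meets at most `r - 1` layers, hence
has independence number at most `ℓ (r - 1)`. The `r` choices of `s` form the cover: a vertex is
missed exactly by the set indexed by its layer mod `r`.
-/

namespace SimpleGraph

variable {V : Type*} {G : SimpleGraph V}

theorem isBridge_of_forall_boundary {S : Set V} {u v : V} (hu : u ∈ S) (hv : v ∉ S)
    (h : ∀ x y, G.Adj x y → x ∈ S → y ∉ S → x = u ∧ y = v) : G.IsBridge s(u, v) := by
  refine isBridge_iff_forall_walk_mem_edges.mpr fun p => ?_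
  obtain ⟨d, hd, hdS, hdS'⟩ := p.exists_boundary_dart S hu hv
  obtain ⟨rfl, rfl⟩ := h _ _ d.adj hdS hdS'
  exact List.mem_map_of_mem hd

section Spine

variable {ι : Type*} (T : SimpleGraph ι) (t₀ : ι) (m : ℕ)

/-- `m` copies of `T`, with the copies of `t₀` joined into a path. -/
def spine : SimpleGraph (ι × Fin m) where
  Adj x y := (x.2 = y.2 ∧ T.Adj x.1 y.1) ∨
    (x.1 = t₀ ∧ y.1 = t₀ ∧ ((x.2 : ℕ) + 1 = y.2 ∨ (y.2 : ℕ) + 1 = x.2))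
  symm := by
    constructor
    rintro x y (⟨h₁, h₂⟩ | ⟨h₁, h₂, h₃⟩)
    · exact .inl ⟨h₁.symm, h₂.symm⟩
    · exact .inr ⟨h₂, h₁, h₃.symm⟩
  loopless := by
    constructor
    rintro x (⟨-, h⟩ | ⟨-, -, h⟩)
    · exact h.ne rfl
    · omega

variable {T t₀ m}

theorem spine_adj_of_adj {t t' : ι} (h : T.Adj t t') (b : Fin m) :
    (spine T t₀ m).Adj (t, b) (t', b) :=
  .inl ⟨rfl, h⟩

theorem spine_reachable_zero (hm : 0 < m) (b : Fin m) :
    (spine T t₀ m).Reachable (t₀, ⟨0, hm⟩) (t₀, b) := by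
  obtain ⟨n, hn⟩ := b
  induction n with
  | zero => rfl
  | succ n ih => exact (ih (by omega)).trans (Adj.reachable (.inr ⟨rfl, rfl, .inl rfl⟩))

theorem spine_connected (hT : T.Connected) (hm : 0 < m) : (spine T t₀ m).Connected := by
  have hcopy : ∀ x : ι × Fin m, (spine T t₀ m).Reachable x (t₀, x.2) := fun x =>
    (hT.preconnected x.1 t₀).map ⟨fun t => (t, x.2), fun h => spine_adj_of_adj h x.2⟩
  have : Nonempty (ι × Fin m) := ⟨(t₀, ⟨0, hm⟩)⟩
  refine ⟨fun x y => (hcopy x).trans ?_⟩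
  exact ((spine_reachable_zero hm x.2).symm.trans
    (spine_reachable_zero hm y.2)).trans (hcopy y).symm

theorem spine_isAcyclic (hT : T.IsAcyclic) : (spine T t₀ m).IsAcyclic := by
  refine isAcyclic_iff_forall_adj_isBridge.mpr ?_
  rintro ⟨t, b⟩ ⟨t', b'⟩ (⟨hb, hadj⟩ | ⟨ht, ht', hbb'⟩) <;> dsimp only at *
  · subst hb
    have hbr := isBridge_iff.mp (isAcyclic_iff_forall_adj_isBridge.mp hT hadj)
    -- the component of `t` in `T - tt'` inside copy `b`, together with all other copies
    -- if that component contains `t₀`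
    set R := {z | (T.deleteEdges {s(t, t')}).Reachable t z}
    refine isBridge_of_forall_boundary (S := {z | if z.2 = b then z.1 ∈ R else t₀ ∈ R})
      (by simp [R]) (by simpa [R] using hbr) ?_
    rintro ⟨z, c⟩ ⟨z', c'⟩ (⟨hc, hzz'⟩ | ⟨hz₀, hz₀', -⟩) hz hz' <;>
      simp only [Set.mem_ofPred_eq] at hz hz' <;> dsimp only at *
    · subst hc
      split_ifs at hz hz' with hcb
      · subst hcb
        by_cases he : s(z, z') = s(t, t')
        · rcases Sym2.eq_iff.mp he with ⟨rfl, rfl⟩ | ⟨rfl, rfl⟩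
          · exact ⟨rfl, rfl⟩
          · exact absurd hz hbr
        · exact absurd (hz.trans (Adj.reachable (by simp [hzz', he]))) hz'
      · exact absurd hz hz'
    · subst hz₀ hz₀'
      split_ifs at hz hz' <;> exact absurd hz hz'
  · subst ht ht'
    wlog h : (b : ℕ) + 1 = b' generalizing b b'
    · rw [Sym2.eq_swap]
      exact this b' b hbb'.symm (hbb'.resolve_left h)
    refine isBridge_of_forall_boundary (S := {z | (z.2 : ℕ) ≤ b}) (by simp) (by simp; omega) ?_
    rintro ⟨z, c⟩ ⟨z', c'⟩ (⟨hc, -⟩ | ⟨hz₀, hz₀', hcc'⟩) hz hz' <;>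
      simp only [Set.mem_ofPred_eq, Prod.mk.injEq] at hz hz' ⊢ <;> dsimp only at *
    · exact absurd (hc ▸ hz) hz'
    · exact ⟨⟨hz₀, Fin.ext (by omega)⟩, ⟨hz₀', Fin.ext (by omega)⟩⟩

theorem spine_isTree (hT : T.IsTree) (hm : 0 < m) : (spine T t₀ m).IsTree :=
  ⟨spine_connected hT.connected hm, spine_isAcyclic hT.isAcyclic⟩

end Spine

end SimpleGraph

namespace TreeDecomp

variable {V : Type*} {G : SimpleGraph V}

def induce (td : TreeDecomp G) (S : Set V) : TreeDecomp (G.induce S) where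
  ι := td.ι
  fin := td.fin
  T := td.T
  isTree := td.isTree
  bag t := Subtype.val ⁻¹' td.bag t
  mem_bag v := td.mem_bag v
  edge_bag _ _ h := td.edge_bag h
  bag_connected v := td.bag_connected v

noncomputable def split (td : TreeDecomp G) {m : ℕ} (hm : 0 < m) (f : V → Fin m)
    (hf : ∀ ⦃u v⦄, G.Adj u v → f u = f v) : TreeDecomp G where
  ι := td.ι × Fin m
  fin := letI := td.fin; inferInstance
  T := td.T.spine td.isTree.connected.nonempty.some m
  isTree := SimpleGraph.spine_isTree td.isTree hm
  bag x := {v ∈ td.bag x.1 | f v = x.2}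
  mem_bag v :=
    let ⟨t, ht⟩ := td.mem_bag v
    ⟨(t, f v), ht, rfl⟩
  edge_bag u v h :=
    let ⟨t, hu, hv⟩ := td.edge_bag h
    ⟨(t, f u), ⟨hu, rfl⟩, hv, (hf h).symm⟩
  bag_connected v := by
    refine (td.bag_connected v).map ⟨fun t => ⟨(t.1, f v), t.2, rfl⟩, fun h => .inl ⟨rfl, h⟩⟩ ?_
    rintro ⟨⟨t, b⟩, ht, hb⟩
    exact ⟨⟨t, ht⟩, Subtype.ext (Prod.ext rfl hb)⟩

end TreeDecomp

section IndepLE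

variable {V : Type*} {G : SimpleGraph V}

theorem IndepLE.mono {S S' : Set V} {k k' : ℕ} (h : IndepLE G S' k) (hS : S ⊆ S') (hk : k ≤ k') :
    IndepLE G S k' :=
  fun I hI => (h I ⟨hI.1.trans hS, hI.2⟩).trans hk

theorem IndepLE.induce {C : Set V} {S : Set C} {k : ℕ} (h : IndepLE G (Subtype.val '' S) k) :
    IndepLE (G.induce C) S k := by
  intro I ⟨hIS, hI⟩
  rw [← Finset.card_map (.subtype _)]
  refine h _ ⟨?_, ?_⟩
  · rw [Finset.coe_map]
    exact Set.image_mono hIS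
  · simp only [Finset.mem_map, Function.Embedding.coe_subtype]
    rintro _ ⟨u, hu, rfl⟩ _ ⟨v, hv, rfl⟩ huv
    exact hI u hu v hv (ne_of_apply_ne _ huv)

theorem IndepLE.of_layers {S : Set V} {l : ℕ} (L : V → ℕ) (K : Finset ℕ) (hK : ∀ v ∈ S, L v ∈ K)
    (h : ∀ i ∈ K, IndepLE G (S ∩ {v | L v = i}) l) : IndepLE G S (K.card * l) := by
  intro I hI
  rw [Finset.card_eq_sum_card_fiberwise fun v hv => hK v (hI.1 hv), ← smul_eq_mul,
    ← Finset.sum_const]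
  refine Finset.sum_le_sum fun i hi => h i hi _ ⟨?_, fun u hu v hv => ?_⟩
  · intro v hv
    rw [Finset.coe_filter] at hv
    exact ⟨hI.1 hv.1, hv.2⟩
  · exact hI.2 u (Finset.mem_filter.mp hu).1 v (Finset.mem_filter.mp hv).1

end IndepLE

namespace Nat

theorem add_sub_mod_eq_zero_iff {n r s : ℕ} (hs : s < r) : (n + (r - s)) % r = 0 ↔ n % r = s := by
  rw [← Nat.mod_add_mod]
  have := Nat.mod_lt n (by omega : 0 < r)
  rcases lt_or_ge (n % r) s with h | h
  · rw [Nat.mod_eq_of_lt (by omega)]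
    omega
  · rw [show n % r + (r - s) = n % r - s + r by omega, Nat.add_mod_right,
      Nat.mod_eq_of_lt (by omega)]
    omega

theorem div_eq_div_of_le_add_one {a b r : ℕ} (ha : a % r ≠ 0) (hb : b % r ≠ 0) (hab : a ≤ b + 1)
    (hba : b ≤ a + 1) : a / r = b / r := by
  rcases (by omega : a = b + 1 ∨ a = b ∨ b = a + 1) with rfl | rfl | rfl
  · exact Nat.succ_div_of_not_dvd (Nat.dvd_iff_mod_eq_zero.not.mpr ha)
  · rfl
  · exact (Nat.succ_div_of_not_dvd (Nat.dvd_iff_mod_eq_zero.not.mpr hb)).symm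

theorem mem_image_erase_range_of_div_eq {n r b : ℕ} (hr : 0 < r) (hn : n % r ≠ 0)
    (hb : n / r = b) : n ∈ ((Finset.range r).erase 0).image (b * r + ·) := by
  refine Finset.mem_image.mpr ⟨n % r, ?_, ?_⟩
  · simpa [hn] using Nat.mod_lt n hr
  · rw [← hb, Nat.mul_comm, Nat.div_add_mod]

end Nat

theorem treeAlphaLE_induce_layer_mod_ne {V : Type*} [Fintype V] {G : SimpleGraph V} {L : V → ℕ}
    {l r s : ℕ} (td : TreeDecomp G) (hL : IsLayering G L)
    (hbag : ∀ t i, IndepLE G (td.bag t ∩ {v | L v = i}) l) (hs : s < r) :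
    treeAlphaLE (G.induce {v | L v % r ≠ s}) (l * (r - 1)) := by
  set C := {v | L v % r ≠ s}
  -- shifting by `r - s` moves the deleted layers onto the multiples of `r`
  let block : C → ℕ := fun v => (L v + (r - s)) / r
  have hblock : ∀ ⦃u v : C⦄, (G.induce C).Adj u v → block u = block v := fun u v h =>
    Nat.div_eq_div_of_le_add_one ((Nat.add_sub_mod_eq_zero_iff hs).not.mpr u.2)
      ((Nat.add_sub_mod_eq_zero_iff hs).not.mpr v.2)
      (by have : (L u : ℤ) ≤ L v + 1 := hL h; omega)
      (by have : (L v : ℤ) ≤ L u + 1 := hL h.symm; omega)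
  let f : C → Fin (Finset.univ.sup block + 1) := fun v =>
    ⟨block v, Nat.lt_succ_of_le (Finset.le_sup (Finset.mem_univ v))⟩
  refine ⟨(td.induce C).split (Nat.succ_pos _) f fun u v h => Fin.ext (hblock h), ?_⟩
  rintro ⟨t, b⟩
  let K := ((Finset.range r).erase 0).image fun i => b * r + i - (r - s)
  have hK : K.card ≤ r - 1 := Finset.card_image_le.trans <| by
    rw [Finset.card_erase_of_mem (Finset.mem_range.mpr (by omega)), Finset.card_range]
  refine IndepLE.induce ((IndepLE.of_layers (l := l) L K ?_ fun i _ => ?_).mono le_rfl ?_)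
  · rintro _ ⟨v, ⟨-, hvb⟩, rfl⟩
    obtain ⟨i, hi, hiv⟩ := Finset.mem_image.mp (Nat.mem_image_erase_range_of_div_eq (by omega)
      ((Nat.add_sub_mod_eq_zero_iff hs).not.mpr v.2) (congrArg Fin.val hvb))
    exact Finset.mem_image.mpr ⟨i, hi, by dsimp only at hiv; omega⟩
  · refine (hbag t i).mono ?_ le_rfl
    rintro _ ⟨⟨v, ⟨hvt, -⟩, rfl⟩, hvi⟩
    exact ⟨hvt, hvi⟩
  · rw [Nat.mul_comm]
    exact Nat.mul_le_mul_left l hK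

theorem isGeneralCover_of_coverCount_eq {V : Type*} {𝒞 : Multiset (Set V)} (h𝒞 : 𝒞 ≠ 0)
    (hcount : ∀ v, coverCount 𝒞 v = Multiset.card 𝒞 - 1) :
    IsGeneralCover (1 - 1 / (Multiset.card 𝒞 : ℝ)) 𝒞 := by
  have hpos : 0 < Multiset.card 𝒞 := Multiset.card_pos.mpr h𝒞
  refine ⟨h𝒞, fun v => ?_⟩
  rw [hcount, Nat.cast_sub hpos, one_sub_mul, one_div_mul_cancel (by positivity), Nat.cast_one]

theorem coverCount_map_range_mod_ne {V : Type*} (L : V → ℕ) {r : ℕ} (hr : 0 < r) (v : V) :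
    coverCount ((Multiset.range r).map fun s => {v | L v % r ≠ s}) v = r - 1 := by
  rw [coverCount, Multiset.countP_map, ← Finset.range_val, ← Finset.filter_val]
  simp only [Set.mem_ofPred_eq]
  rw [Finset.filter_ne, Finset.card_val, Finset.card_erase_of_mem
    (Finset.mem_range.mpr (Nat.mod_lt _ hr)), Finset.card_range]

/-- From a tree decomposition and a layering with `α(G[X_t ∩ V_i]) ≤ ℓ`, for every
`r ≥ 1` one gets a `(1 - 1/r)`-general cover consisting of `r` subsets, each vertex belonging
to exactly `r - 1` of them, all whose induced subgraphs have tree-independence number at most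
`ℓ·(r-1)`. -/
theorem stmt6 {V : Type} [Fintype V] (G : SimpleGraph V) (l : ℕ)
    (td : TreeDecomp G) (L : V → ℕ) (hL : IsLayering G L)
    (hbag : ∀ (t : td.ι) (i : ℕ), IndepLE G (td.bag t ∩ {v | L v = i}) l)
    (r : ℕ) (hr : 1 ≤ r) :
    ∃ 𝒞 : Multiset (Set V),
      Multiset.card 𝒞 = r ∧
      IsGeneralCover (1 - 1 / (r : ℝ)) 𝒞 ∧
      (∀ v : V, coverCount 𝒞 v = r - 1) ∧
      ∀ C ∈ 𝒞, treeAlpha (G.induce C) ≤ l * (r - 1) := by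
  set 𝒞 := (Multiset.range r).map fun s => {v | L v % r ≠ s}
  have hcard : Multiset.card 𝒞 = r := by simp [𝒞]
  have hcount : ∀ v, coverCount 𝒞 v = r - 1 := coverCount_map_range_mod_ne L hr
  refine ⟨𝒞, hcard, ?_, hcount, ?_⟩
  · rw [← hcard] at hcount ⊢
    exact isGeneralCover_of_coverCount_eq (Multiset.card_pos.mp (by omega)) hcount
  · simp only [𝒞, Multiset.mem_map, Multiset.mem_range]
    rintro _ ⟨s, hs, rfl⟩
    exact Nat.sInf_le (treeAlphaLE_induce_layer_mod_ne td hL hbag hs)
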